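/- Let a < 0, b > 0, c = a/b and c₀ < 0, and let ρ(x,t) = ρ¹(x,t) + ρ²(x,t) + ρ³(x,t) be the explicit solution defined below. Then for every x ≥ 0, ρ(x,t) → −c e^{c x} as t → ∞; that is, the solution converges pointwise to the stationary density determined by the new drift and diffusion coefficients. -/

import Mathlib

/-!
The terms `ρ¹`, `ρ²` and the second summand of `ρ³` all have the shape
`e^{αt + p} Φ((βt + q)/σ)` with `α = c₀(c₀b - a)` and `β = 2c₀b - a`. The Chernoff bound
`Φ(z) ≤ e^{λz + λ²/2}` with `λ = lσ`, `l ≥ 0`, bounds such a term by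
`e^{(bu² - au)t + const}` where `u = c₀ + l`; as `c₀ < 0` and `a/b < 0`, some `u ≥ c₀`
lies in `(a/b, 0)`, where the rate `bu² - au` is negative. The remaining summand
`-c e^{cx} Φ(-(x + at)/σ)` tends to `-c e^{cx}` because `a < 0` drives the argument of `Φ`
to `+∞`.
-/

open MeasureTheory Set Filter Topology

/-- The standard normal cumulative distribution function `Φ`. -/
noncomputable def stdNormalCdf (z : ℝ) : ℝ :=
  ∫ x in Iic z, (Real.sqrt (2 * Real.pi))⁻¹ * Real.exp (-x ^ 2 / 2)

/-- First part `ρ¹` of the explicit solution (with `c = a/b`, `σ = √(2bt)`). -/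
noncomputable def explRho1 (a b c₀ : ℝ) (x t : ℝ) : ℝ :=
  -c₀ * Real.exp (c₀ * (c₀ * b * t + x - a * t)) *
    stdNormalCdf ((2 * c₀ * b * t + x - a * t) / Real.sqrt (2 * b * t))

/-- Second part `ρ²` of the explicit solution (with `d = c₀ − a/b`). -/
noncomputable def explRho2 (a b c₀ : ℝ) (x t : ℝ) : ℝ :=
  -c₀ * Real.exp ((c₀ - a / b) * ((c₀ - a / b) * b * t - x + a * t)) *
    stdNormalCdf ((2 * (c₀ - a / b) * b * t - x + a * t) / Real.sqrt (2 * b * t))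

/-- Third part `ρ³` of the explicit solution (with `c = a/b`). -/
noncomputable def explRho3 (a b c₀ : ℝ) (x t : ℝ) : ℝ :=
  -(a / b) * Real.exp ((a / b) * x) *
      stdNormalCdf (-(x + a * t) / Real.sqrt (2 * b * t))
  + (a / b) * Real.exp ((a / b) * x) * Real.exp (c₀ * (c₀ * b * t - x - a * t)) *
      stdNormalCdf ((2 * c₀ * b * t - x - a * t) / Real.sqrt (2 * b * t))

/-- The explicit solution `ρ = ρ¹ + ρ² + ρ³` of the Smoluchowski equation on the
half-line with exponential initial datum `ρ₀(x) = −c₀ e^{c₀ x}`. -/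
noncomputable def explRho (a b c₀ : ℝ) (x t : ℝ) : ℝ :=
  explRho1 a b c₀ x t + explRho2 a b c₀ x t + explRho3 a b c₀ x t

open ProbabilityTheory Real

theorem stdNormalCdf_eq_cdf_gaussianReal : stdNormalCdf = cdf (gaussianReal 0 1) := by
  ext z
  rw [cdf_eq_real, measureReal_def, gaussianReal_apply_eq_integral 0 one_ne_zero,
    ENNReal.toReal_ofReal (setIntegral_nonneg measurableSet_Iic fun x _ ↦
      gaussianPDFReal_nonneg 0 1 x)]
  simp [stdNormalCdf, gaussianPDFReal]

theorem tendsto_stdNormalCdf_atTop : Tendsto stdNormalCdf atTop (𝓝 1) :=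
  stdNormalCdf_eq_cdf_gaussianReal ▸ tendsto_cdf_atTop _

theorem stdNormalCdf_nonneg (z : ℝ) : 0 ≤ stdNormalCdf z :=
  stdNormalCdf_eq_cdf_gaussianReal ▸ cdf_nonneg _ z

theorem stdNormalCdf_le_exp {l : ℝ} (hl : 0 ≤ l) (z : ℝ) :
    stdNormalCdf z ≤ exp (l * z + l ^ 2 / 2) := by
  have h := measure_le_le_exp_mul_mgf (X := id) (μ := gaussianReal 0 1) z (neg_nonpos.2 hl)
    (integrable_exp_mul_gaussianReal _)
  rw [mgf_id_gaussianReal, ← exp_add] at h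
  rw [stdNormalCdf_eq_cdf_gaussianReal, cdf_eq_real]
  convert h using 2 <;> simp [Iic_def]

theorem tendsto_div_sqrt_atTop {b β : ℝ} (hb : 0 < b) (hβ : 0 < β) (q : ℝ) :
    Tendsto (fun t ↦ (β * t + q) / √(2 * b * t)) atTop atTop := by
  have h2b : 0 < √(2 * b) := sqrt_pos.2 (by positivity)
  have h : Tendsto (fun t ↦ √t * ((β + q / t) / √(2 * b))) atTop atTop := by
    have hlim := ((tendsto_const_nhds (x := β)).add
      ((tendsto_const_nhds (x := q)).div_atTop tendsto_id)).div_const √(2 * b)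
    rw [add_zero] at hlim
    exact tendsto_sqrt_atTop.atTop_mul_pos (div_pos hβ h2b) hlim
  refine h.congr' ?_
  filter_upwards [eventually_gt_atTop 0] with t ht
  have ht' : 0 < √t := sqrt_pos.2 ht
  rw [sqrt_mul (by positivity : (0:ℝ) ≤ 2 * b) t, eq_div_iff (by positivity)]
  calc √t * ((β + q / t) / √(2 * b)) * (√(2 * b) * √t)
      = (√t * √t) * (β + q / t) * (√(2 * b) / √(2 * b)) := by ring
    _ = β * t + q := by rw [mul_self_sqrt ht.le, div_self h2b.ne']; field_simp

theorem tendsto_exp_mul_stdNormalCdf_atTop_zero {b : ℝ} (hb : 0 < b) {α β l : ℝ} (p q : ℝ)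
    (hl : 0 ≤ l) (hrate : α + l * β + l ^ 2 * b < 0) :
    Tendsto (fun t ↦ exp (α * t + p) * stdNormalCdf ((β * t + q) / √(2 * b * t)))
      atTop (𝓝 0) := by
  have hbound : Tendsto (fun t ↦ exp ((α + l * β + l ^ 2 * b) * t + (p + l * q)))
      atTop (𝓝 0) :=
    tendsto_exp_atBot.comp <| tendsto_atBot_add_const_right _ _
      ((tendsto_const_mul_atBot_of_neg hrate).2 tendsto_id)
  refine tendsto_of_tendsto_of_tendsto_of_le_of_le' tendsto_const_nhds hbound
    (Eventually.of_forall fun t ↦ mul_nonneg (exp_pos _).le (stdNormalCdf_nonneg _)) ?_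
  filter_upwards [eventually_gt_atTop 0] with t ht
  have hσ : 0 < √(2 * b * t) := sqrt_pos.2 (by positivity)
  have hchernoff := stdNormalCdf_le_exp (mul_nonneg hl hσ.le) ((β * t + q) / √(2 * b * t))
  have hexponent :
      l * √(2 * b * t) * ((β * t + q) / √(2 * b * t)) + (l * √(2 * b * t)) ^ 2 / 2
        = l * (β * t + q) + l ^ 2 * b * t := by
    rw [mul_pow, sq_sqrt (by positivity)]
    field_simp
  rw [hexponent] at hchernoff
  calc exp (α * t + p) * stdNormalCdf ((β * t + q) / √(2 * b * t))
      ≤ exp (α * t + p) * exp (l * (β * t + q) + l ^ 2 * b * t) :=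
        mul_le_mul_of_nonneg_left hchernoff (exp_pos _).le
    _ = exp ((α + l * β + l ^ 2 * b) * t + (p + l * q)) := by rw [← exp_add]; ring_nf

section ExplicitSolution

variable {a b c₀ : ℝ} (ha : a < 0) (hb : 0 < b) (hc₀ : c₀ < 0)
include ha hb hc₀

theorem tendsto_exp_mul_stdNormalCdf_atTop_zero_of_neg (p q : ℝ) :
    Tendsto (fun t ↦ exp (c₀ * (c₀ * b - a) * t + p) *
      stdNormalCdf (((2 * c₀ * b - a) * t + q) / √(2 * b * t))) atTop (𝓝 0) := by
  set u := max c₀ (a / (2 * b))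
  have hu : u < 0 := max_lt hc₀ (div_neg_of_neg_of_pos ha (by positivity))
  have hbu : a < b * u := by
    have : a ≤ u * (2 * b) := (div_le_iff₀ (by positivity)).1 (le_max_right _ _)
    linarith
  refine tendsto_exp_mul_stdNormalCdf_atTop_zero hb p q (l := u - c₀)
    (sub_nonneg.2 (le_max_left _ _)) ?_
  calc c₀ * (c₀ * b - a) + (u - c₀) * (2 * c₀ * b - a) + (u - c₀) ^ 2 * b
      = u * (b * u - a) := by ring
    _ < 0 := mul_neg_of_neg_of_pos hu (by linarith)

theorem tendsto_explRho1_atTop (x : ℝ) : Tendsto (explRho1 a b c₀ x) atTop (𝓝 0) := by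
  have h :=
    (tendsto_exp_mul_stdNormalCdf_atTop_zero_of_neg ha hb hc₀ (c₀ * x) x).const_mul (-c₀)
  rw [mul_zero] at h
  refine h.congr fun t ↦ ?_
  rw [explRho1,
    show c₀ * (c₀ * b * t + x - a * t) = c₀ * (c₀ * b - a) * t + c₀ * x by ring,
    show 2 * c₀ * b * t + x - a * t = (2 * c₀ * b - a) * t + x by ring]
  simp only [mul_assoc]

theorem tendsto_explRho2_atTop (x : ℝ) : Tendsto (explRho2 a b c₀ x) atTop (𝓝 0) := by
  have h := (tendsto_exp_mul_stdNormalCdf_atTop_zero_of_neg ha hb hc₀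
    (-(c₀ - a / b) * x) (-x)).const_mul (-c₀)
  rw [mul_zero] at h
  refine h.congr fun t ↦ ?_
  rw [explRho2, show (c₀ - a / b) * ((c₀ - a / b) * b * t - x + a * t)
      = c₀ * (c₀ * b - a) * t + -(c₀ - a / b) * x by field_simp; ring,
    show 2 * (c₀ - a / b) * b * t - x + a * t = (2 * c₀ * b - a) * t + -x by field_simp; ring]
  simp only [mul_assoc]

theorem tendsto_explRho3_atTop (x : ℝ) :
    Tendsto (explRho3 a b c₀ x) atTop (𝓝 (-(a / b) * exp (a / b * x))) := by
  have hmain : Tendsto (fun t ↦ -(a / b) * exp (a / b * x) *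
      stdNormalCdf (-(x + a * t) / √(2 * b * t))) atTop (𝓝 (-(a / b) * exp (a / b * x))) := by
    have h := (tendsto_stdNormalCdf_atTop.comp
      (tendsto_div_sqrt_atTop hb (neg_pos.2 ha) (-x))).const_mul (-(a / b) * exp (a / b * x))
    rw [mul_one] at h
    refine h.congr fun t ↦ ?_
    rw [Function.comp_apply, show -a * t + -x = -(x + a * t) by ring]
  have hrest : Tendsto (fun t ↦ a / b * exp (a / b * x) *
      exp (c₀ * (c₀ * b * t - x - a * t)) *
      stdNormalCdf ((2 * c₀ * b * t - x - a * t) / √(2 * b * t))) atTop (𝓝 0) := by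
    have h := (tendsto_exp_mul_stdNormalCdf_atTop_zero_of_neg ha hb hc₀
      (-c₀ * x) (-x)).const_mul (a / b * exp (a / b * x))
    rw [mul_zero] at h
    refine h.congr fun t ↦ ?_
    rw [show c₀ * (c₀ * b * t - x - a * t) = c₀ * (c₀ * b - a) * t + -c₀ * x by ring,
      show 2 * c₀ * b * t - x - a * t = (2 * c₀ * b - a) * t + -x by ring]
    simp only [mul_assoc]
  have h := hmain.add hrest
  rw [add_zero] at h
  exact h

end ExplicitSolution

/-- For `a < 0` the explicit solution converges pointwise, as `t → ∞`, to the
stationary density `−c e^{c x}` with `c = a/b`. -/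
theorem stmt_12 (a b c₀ : ℝ) (ha : a < 0) (hb : 0 < b) (hc₀ : c₀ < 0) :
    ∀ x ≥ (0:ℝ),
      Tendsto (fun t => explRho a b c₀ x t) atTop
        (𝓝 (-(a / b) * Real.exp ((a / b) * x))) := by
  intro x _
  have h := ((tendsto_explRho1_atTop ha hb hc₀ x).add (tendsto_explRho2_atTop ha hb hc₀ x)).add
    (tendsto_explRho3_atTop ha hb hc₀ x)
  rw [add_zero, zero_add] at h
  exact h
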